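/- arXiv:1310.2370 — 4 statements merged into one kernel-verified Lean document; each statement's English description precedes it below -/
import Mathlib

section
/- Let R = ℤ[H]/(H^{n+1}) and for α = Σ_{i=0}^{n} a_i H^i ∈ R (a_i ∈ ℤ) and m ∈ ℤ define the tensor operation T_m(α) := Σ_{i=0}^{n} a_i H^i (1+mH)^{-i} (where (1+mH) is a unit in R). Then for all m, m' ∈ ℤ and all α ∈ R, applying the operation with the graded decomposition re-extracted at each stage gives T_{m'}(T_m(α)) = T_{m+m'}(α); i.e., the operations T_m define an action of (ℤ,+) on R. -/
open PowerSeries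

/-- The tensor operation `T_m` on the model `ℤ[H]/(H^(n+1)) ⊆ ℚ[[H]]`:
`T_m (Σ a_i H^i) = Σ_{i=0}^n a_i H^i (1+mH)^{-i}`, with graded components
extracted from the input via `coeff`. Equality in the quotient ring is
expressed as equality of coefficients in degrees `≤ n`. -/
noncomputable def T (n : ℕ) (m : ℤ) (f : PowerSeries ℚ) : PowerSeries ℚ :=
  ∑ i ∈ Finset.range (n + 1),
    PowerSeries.C ((PowerSeries.coeff i) f) * PowerSeries.X ^ i *
      ((1 + PowerSeries.C (m : ℚ) * PowerSeries.X)⁻¹) ^ i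

/-- The dual operation `D (Σ a_i H^i) = Σ (-1)^i a_i H^i`. -/
noncomputable def D (f : PowerSeries ℚ) : PowerSeries ℚ :=
  PowerSeries.mk fun i => (-1) ^ i * (PowerSeries.coeff i) f

/-!
Writing `w_m = H (1 + mH)⁻¹` (`twistedX m`), the operation `T_m` is the substitution `H ↦ w_m`
applied to the truncation of `α` in degrees `≤ n`. Substitution of a series without constant term
is a ring homomorphism that preserves the ideal `(H^(n+1))`, so the intermediate truncation may be
dropped, and the two substitutions compose to the substitution of `w_m (w_{m'}) = w_{m+m'}`.
-/

namespace PowerSeries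

variable {R : Type*} [CommRing R]

theorem trunc_subst_trunc {a : R⟦X⟧} (ha : constantCoeff a = 0) (n : ℕ) (f : R⟦X⟧) :
    trunc n (subst a (trunc n f : R⟦X⟧) : R⟦X⟧) = trunc n (subst a f : R⟦X⟧) := by
  have hsubst : HasSubst a := HasSubst.of_constantCoeff_zero' ha
  obtain ⟨b, rfl⟩ := X_dvd_iff.mpr ha
  conv_rhs => rw [eq_X_pow_mul_shift_add_trunc n f]
  rw [subst_add hsubst, subst_mul hsubst, subst_pow hsubst, subst_X hsubst, mul_pow, mul_assoc,
    map_add, trunc_X_pow_self_mul, zero_add]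

variable {k : Type*} [Field k]

noncomputable def twistedX (c : k) : k⟦X⟧ :=
  X * (1 + C c * X)⁻¹

theorem constantCoeff_twistedX (c : k) : constantCoeff (twistedX c) = 0 := by
  simp [twistedX]

theorem hasSubst_twistedX (c : k) : HasSubst (twistedX c) :=
  HasSubst.of_constantCoeff_zero' (constantCoeff_twistedX c)

theorem subst_mul_subst_inv {a φ : k⟦X⟧} (ha : HasSubst a) (hφ : constantCoeff φ ≠ 0) :
    (subst a φ : k⟦X⟧) * subst a φ⁻¹ = 1 := by
  rw [← coe_substAlgHom ha, ← map_mul, PowerSeries.mul_inv_cancel _ hφ, map_one]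

theorem subst_twistedX_twistedX (c d : k) :
    (subst (twistedX d) (twistedX c) : k⟦X⟧) = twistedX (c + d) := by
  have hsubst := hasSubst_twistedX d
  -- `u` inverts `1 + c w_d = (1 + (c + d) X) (1 + d X)⁻¹`, so `w_d u = X (1 + (c + d) X)⁻¹`.
  set u : k⟦X⟧ := subst (twistedX d) (1 + C c * X)⁻¹
  have hu : (1 + C c * twistedX d) * u = 1 := by
    have h := subst_mul_subst_inv hsubst (φ := 1 + C c * X) (by simp)
    rwa [← coe_substAlgHom hsubst, map_add, map_one, map_mul, substAlgHom_X, coe_substAlgHom,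
      subst_C] at h
  have hd : (1 + C d * X) * (1 + C d * X)⁻¹ = 1 := PowerSeries.mul_inv_cancel _ (by simp)
  show subst (twistedX d) (X * (1 + C c * X)⁻¹) = _
  rw [subst_mul hsubst, subst_X hsubst]
  change twistedX d * u = twistedX (c + d)
  rw [twistedX] at hu ⊢
  rw [twistedX, PowerSeries.eq_mul_inv_iff_mul_eq (by simp), map_add]
  linear_combination X * u * hd + X * hu

end PowerSeries

theorem T_eq_subst_trunc (n : ℕ) (m : ℤ) (f : ℚ⟦X⟧) :
    T n m f = subst (twistedX (m : ℚ)) (trunc (n + 1) f : ℚ⟦X⟧) := by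
  rw [subst_coe (hasSubst_twistedX _), Polynomial.aeval_def, eval₂_trunc_eq_sum_range, T]
  refine Finset.sum_congr rfl fun i _ => ?_
  rw [mul_assoc, ← mul_pow]
  rfl

/-- The operations `T_m` define an action of `(ℤ,+)` on `ℤ[H]/(H^(n+1))`:
`T_{m'} (T_m α) = T_{m+m'} α`, graded components re-extracted at each stage. -/
theorem tensor_action (n : ℕ) (m m' : ℤ) (f : PowerSeries ℚ) :
    ∀ k ≤ n, (PowerSeries.coeff k) (T n m' (T n m f)) =
      (PowerSeries.coeff k) (T n (m + m') f) := by
  have htrunc : trunc (n + 1) (T n m' (T n m f)) = trunc (n + 1) (T n (m + m') f) := by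
    rw [T_eq_subst_trunc n m', trunc_subst_trunc (constantCoeff_twistedX _), T_eq_subst_trunc,
      subst_comp_subst_apply (hasSubst_twistedX _) (hasSubst_twistedX _),
      subst_twistedX_twistedX, T_eq_subst_trunc, Int.cast_add]
  intro k hk
  simpa [coeff_trunc, Nat.lt_succ_of_le hk] using congrArg (Polynomial.coeff · k) htrunc
end

section
/- Let R = ℤ[H]/(H^{n+1}). Define the dual operation D(α) := Σ_i (-1)^i a_i H^i for α = Σ_i a_i H^i, and the tensor operation T_m(α) := Σ_i a_i H^i (1+mH)^{-i}. Then for every α ∈ R and m ∈ ℤ, D(T_m(α)) = T_{-m}(D(α)), where on the left-hand side the graded components of T_m(α) are extracted before applying D. -/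
open PowerSeries

/-! `D` is the substitution `H ↦ -H`, i.e. `rescale (-1)`, a ring endomorphism of `ℚ⟦X⟧`
commuting with inverses; it sends `(1 + mH)⁻¹` to `(1 - mH)⁻¹`, so `D (T_m f) = T_{-m} (D f)`
holds already in `ℚ⟦X⟧`, not only modulo `H^(n+1)`. -/

namespace PowerSeries

section CommSemiring

variable {R : Type*} [CommSemiring R]

theorem constantCoeff_rescale (a : R) (f : R⟦X⟧) :
    constantCoeff (rescale a f) = constantCoeff f := by
  simp [← coeff_zero_eq_constantCoeff]

theorem rescale_C (a r : R) : rescale a (C r) = C r := by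
  ext (_ | _) <;> simp [coeff_C]

end CommSemiring

theorem rescale_inv {k : Type*} [Field k] (a : k) (f : k⟦X⟧) :
    rescale a f⁻¹ = (rescale a f)⁻¹ := by
  by_cases hf : constantCoeff f = 0
  · rw [inv_eq_zero.2 hf, inv_eq_zero.2 (by rwa [constantCoeff_rescale]), map_zero]
  · rw [eq_inv_iff_mul_eq_one (by rwa [constantCoeff_rescale]), ← map_mul,
      PowerSeries.inv_mul_cancel f hf, map_one]

theorem rescale_neg_one_inv_one_add_C_mul_X {k : Type*} [Field k] (m : k) :
    rescale (-1) (1 + C m * X)⁻¹ = (1 + C (-m) * X)⁻¹ := by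
  rw [rescale_inv, map_add, map_one, map_mul, rescale_C, rescale_neg_one_X, map_neg, mul_neg,
    neg_mul]

end PowerSeries

theorem D_eq_rescale (f : PowerSeries ℚ) : D f = rescale (-1) f := by
  ext
  rw [D, coeff_mk, coeff_rescale]

theorem D_T (n : ℕ) (m : ℤ) (f : PowerSeries ℚ) : D (T n m f) = T n (-m) (D f) := by
  simp only [D_eq_rescale, T, map_sum, map_mul, map_pow, rescale_C, rescale_neg_one_X,
    rescale_neg_one_inv_one_add_C_mul_X, coeff_rescale, Int.cast_neg, neg_pow X]
  refine Finset.sum_congr rfl fun i _ => ?_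
  simp only [map_neg, map_one]
  ring

/-- Compatibility of dual and tensor: `D (T_m α) = T_{-m} (D α)` in `ℤ[H]/(H^(n+1))`. -/
theorem dual_tensor (n : ℕ) (m : ℤ) (f : PowerSeries ℚ) :
    ∀ k ≤ n, (PowerSeries.coeff k) (D (T n m f)) =
      (PowerSeries.coeff k) (T n (-m) (D f)) := by
  intro k _
  rw [D_T]
end

section
/- Let R = ℤ[H]/(H^{n+1}) with tensor operation T_m(α) := Σ_i a_i H^i (1+mH)^{-i} for α = Σ a_i H^i. Then for any e, m ∈ ℤ and any α ∈ R, T_m((1+eH)·α) = (1+(e+m)H)·(1+mH)^{-1}·T_m(α). -/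
open PowerSeries

/-!
`T_m` substitutes `H ↦ H (1+mH)⁻¹` into the degree-`n` truncation of its input, so multiplying
the input by `H` multiplies the output by `H (1+mH)⁻¹`, up to the image of the top coefficient,
which is divisible by `H^(n+1)`. Together with `(1+(e+m)H)(1+mH)⁻¹ = 1 + eH (1+mH)⁻¹` this gives
the formula modulo `H^(n+1)`.
-/

section TensorOperation

variable (n : ℕ) (m : ℤ)

theorem T_add (f g : PowerSeries ℚ) : T n m (f + g) = T n m f + T n m g := by
  simp only [T, map_add, add_mul, Finset.sum_add_distrib]

theorem T_C_mul (c : ℚ) (f : PowerSeries ℚ) : T n m (C c * f) = C c * T n m f := by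
  simp only [T, coeff_C_mul, map_mul, Finset.mul_sum, mul_assoc]

theorem T_X_mul (f : PowerSeries ℚ) :
    T n m (X * f) + C (coeff n f) * (X * (1 + C (m : ℚ) * X)⁻¹) ^ (n + 1) =
      X * (1 + C (m : ℚ) * X)⁻¹ * T n m f := by
  rw [T, T, Finset.sum_range_succ', Finset.mul_sum, Finset.sum_range_succ]
  simp only [coeff_succ_X_mul, coeff_zero_X_mul, map_zero, zero_mul, add_zero]
  congr 1
  · exact Finset.sum_congr rfl fun i _ => by ring
  · ring

end TensorOperation

theorem one_add_C_add_mul_X_mul_inv {k : Type*} [Field k] (a b : k) :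
    (1 + C (a + b) * X) * (1 + C b * X)⁻¹ = 1 + C a * (X * (1 + C b * X)⁻¹) := by
  have hunit : (1 + C b * X) * (1 + C b * X)⁻¹ = 1 := PowerSeries.mul_inv_cancel _ (by simp)
  rw [map_add]
  linear_combination hunit

/-- Rank-one projection formula: `T_m ((1+eH)·α) = (1+(e+m)H)(1+mH)^{-1} · T_m α`
in `ℤ[H]/(H^(n+1))`. -/
theorem tensor_line_bundle (n : ℕ) (e m : ℤ) (α : PowerSeries ℚ) :
    ∀ k ≤ n, (PowerSeries.coeff k)
        (T n m ((1 + PowerSeries.C (e : ℚ) * PowerSeries.X) * α)) =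
      (PowerSeries.coeff k)
        ((1 + PowerSeries.C ((e + m : ℤ) : ℚ) * PowerSeries.X) *
          (1 + PowerSeries.C (m : ℚ) * PowerSeries.X)⁻¹ * T n m α) := by
  intro k hk
  have hsplit : (1 + C ((e + m : ℤ) : ℚ) * X) * (1 + C (m : ℚ) * X)⁻¹ * T n m α =
      T n m ((1 + C (e : ℚ) * X) * α) +
        X ^ (n + 1) * (C (e : ℚ) * C (coeff n α) * (1 + C (m : ℚ) * X)⁻¹ ^ (n + 1)) := by
    rw [Int.cast_add, one_add_C_add_mul_X_mul_inv, one_add_mul (C (e : ℚ) * X),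
      mul_assoc (C (e : ℚ)), T_add, T_C_mul]
    linear_combination (-C (e : ℚ)) * T_X_mul n m α
  rw [hsplit, map_add, coeff_X_pow_mul', if_neg (by omega), add_zero]
end

section
/- In R = ℤ[H]/(H^5), the following identity holds: [(1+H)^5·2H - (1+H)^2·H^3]·(1+2H)^{-1} + (1+H)^4·H - [(1+H)^5·2H^2 + (1+H)^3·H^3]·((1+H)(1+2H))^{-1} - (1+H)^5·3H·(1+3H)^{-1} = 2H^2 - 4H^3 + 10H^4. -/
/-!
Over any commutative ring in which `1 + 2x`, `(1 + x)(1 + 2x)` and `1 + 3x` are invertible, clearing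
denominators shows that the inclusion-exclusion sum equals `2x² - 4x³ + 10x⁴ - 32x⁵(1 + 3x)⁻¹`.
Taking `x = H` in `ℚ⟦H⟧`, the last term is divisible by `H⁵`, so it vanishes in `ℚ[H]/(H⁵)`.
-/

open PowerSeries

theorem inclusion_exclusion_eq_of_mul_eq_one {R : Type*} [CommRing R] {x w u v : R}
    (hw : (1 + 2 * x) * w = 1) (hu : (1 + x) * (1 + 2 * x) * u = 1) (hv : (1 + 3 * x) * v = 1) :
    ((1 + x) ^ 5 * (2 * x) - (1 + x) ^ 2 * x ^ 3) * w + (1 + x) ^ 4 * x -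
        ((1 + x) ^ 5 * (2 * x ^ 2) + (1 + x) ^ 3 * x ^ 3) * u - (1 + x) ^ 5 * (3 * x) * v =
      2 * x ^ 2 - 4 * x ^ 3 + 10 * x ^ 4 - 32 * x ^ 5 * v := by
  have hdenom : (1 + x) * (1 + 2 * x) * (1 + 3 * x) * (u * v) = 1 := by
    linear_combination (1 + 3 * x) * v * hu + hv
  have hcleared : (((1 + x) ^ 5 * (2 * x) - (1 + x) ^ 2 * x ^ 3) * w + (1 + x) ^ 4 * x -
      ((1 + x) ^ 5 * (2 * x ^ 2) + (1 + x) ^ 3 * x ^ 3) * u - (1 + x) ^ 5 * (3 * x) * v -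
      (2 * x ^ 2 - 4 * x ^ 3 + 10 * x ^ 4 - 32 * x ^ 5 * v)) *
        ((1 + x) * (1 + 2 * x) * (1 + 3 * x)) = 0 := by
    linear_combination
      ((1 + x) ^ 5 * (2 * x) - (1 + x) ^ 2 * x ^ 3) * (1 + x) * (1 + 3 * x) * hw -
      ((1 + x) ^ 5 * (2 * x ^ 2) + (1 + x) ^ 3 * x ^ 3) * (1 + 3 * x) * hu -
      ((1 + x) ^ 5 * (3 * x) - 32 * x ^ 5) * (1 + x) * (1 + 2 * x) * hv
  refine sub_eq_zero.1 ?_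
  calc _ = _ * ((1 + x) * (1 + 2 * x) * (1 + 3 * x) * (u * v)) := by rw [hdenom, mul_one]
    _ = 0 := by rw [← mul_assoc, hcleared, zero_mul]

theorem PowerSeries.coeff_eq_of_X_pow_dvd_sub {R : Type*} [CommRing R] {f g : R⟦X⟧} {n k : ℕ}
    (h : X ^ n ∣ f - g) (hk : k < n) : coeff k f = coeff k g := by
  rw [← sub_eq_zero, ← map_sub]
  exact X_pow_dvd_iff.1 h k hk

/-- The inclusion-exclusion computation of `𝔐(Z) = c_SM(Q) + c_SM(H) - c_SM(X) - c_F(Z)`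
in `ℤ[H]/(H^5)`. -/
theorem milnor_inclusion_exclusion (k : ℕ) (hk : k ≤ 4) :
    (PowerSeries.coeff (R := ℚ) k)
        (((1 + PowerSeries.X) ^ 5 * (2 * PowerSeries.X) -
            (1 + PowerSeries.X) ^ 2 * (PowerSeries.X : PowerSeries ℚ) ^ 3) *
            (1 + 2 * PowerSeries.X)⁻¹ +
          (1 + PowerSeries.X) ^ 4 * PowerSeries.X -
          ((1 + PowerSeries.X) ^ 5 * (2 * (PowerSeries.X : PowerSeries ℚ) ^ 2) +
              (1 + PowerSeries.X) ^ 3 * PowerSeries.X ^ 3) *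
            (((1 + PowerSeries.X) * (1 + 2 * PowerSeries.X))⁻¹) -
          (1 + PowerSeries.X) ^ 5 * (3 * PowerSeries.X) * (1 + 3 * PowerSeries.X)⁻¹) =
      (PowerSeries.coeff (R := ℚ) k)
        (2 * (PowerSeries.X : PowerSeries ℚ) ^ 2 - 4 * PowerSeries.X ^ 3 +
          10 * PowerSeries.X ^ 4) := by
  have hw := PowerSeries.mul_inv_cancel (1 + 2 * X : ℚ⟦X⟧) (by simp)
  have hu := PowerSeries.mul_inv_cancel ((1 + X) * (1 + 2 * X) : ℚ⟦X⟧) (by simp)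
  have hv := PowerSeries.mul_inv_cancel (1 + 3 * X : ℚ⟦X⟧) (by simp)
  refine coeff_eq_of_X_pow_dvd_sub ?_ (Nat.lt_succ_of_le hk)
  rw [inclusion_exclusion_eq_of_mul_eq_one hw hu hv]
  exact ⟨-32 * (1 + 3 * X)⁻¹, by ring⟩
end
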